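/- arXiv:1501.04814 — 3 statements merged into one kernel-verified Lean document; each statement's English description precedes it below -/
import Mathlib

section
/- Let r ∈ (0,∞) and let P be a Borel probability measure on ℝ^q satisfying the moment condition ∫ |x|^r dP(x) < ∞. Then for every n ∈ ℕ there exists a set α ⊆ ℝ^q with 1 ≤ card(α) ≤ n attaining the n-th quantization error, i.e. (∫ d(x,α)^r dP(x))^{1/r} = e_{n,r}(P); in particular the set C_{n,r}(P) of n-optimal sets of order r is non-empty. -/
open MeasureTheory Filter Metric
open scoped ENNReal NNReal

/-- The `n`-th quantization error of order `r` for a measure `P`: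
`e_{n,r}(P) = inf { (∫ d(x,α)^r dP)^{1/r} : α ⊆ E, 1 ≤ card α ≤ n }`. -/
noncomputable def quantError {E : Type*} [MetricSpace E] [MeasurableSpace E]
    (P : Measure E) (r : ℝ) (n : ℕ) : ℝ :=
  sInf {e : ℝ | ∃ α : Finset E, 1 ≤ α.card ∧ α.card ≤ n ∧
    e = (∫ x, infDist x (↑α : Set E) ^ r ∂P) ^ (1 / r)}

/-- The upper quantization dimension of order `r`. -/
noncomputable def upperQuantDim {E : Type*} [MetricSpace E] [MeasurableSpace E]
    (P : Measure E) (r : ℝ) : ℝ :=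
  limsup (fun n : ℕ => Real.log n / (- Real.log (quantError P r n))) atTop

/-- The lower quantization dimension of order `r`. -/
noncomputable def lowerQuantDim {E : Type*} [MetricSpace E] [MeasurableSpace E]
    (P : Measure E) (r : ℝ) : ℝ :=
  liminf (fun n : ℕ => Real.log n / (- Real.log (quantError P r n))) atTop

/-- The `s`-dimensional upper quantization coefficient of order `r`. -/
noncomputable def upperQuantCoeff {E : Type*} [MetricSpace E] [MeasurableSpace E]
    (P : Measure E) (r s : ℝ) : ℝ≥0∞ :=
  limsup (fun n : ℕ => ENNReal.ofReal ((n : ℝ) ^ (1 / s) * quantError P r n)) atTop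

/-- The `s`-dimensional lower quantization coefficient of order `r`. -/
noncomputable def lowerQuantCoeff {E : Type*} [MetricSpace E] [MeasurableSpace E]
    (P : Measure E) (r s : ℝ) : ℝ≥0∞ :=
  liminf (fun n : ℕ => ENNReal.ofReal ((n : ℝ) ^ (1 / s) * quantError P r n)) atTop

/-!
Take a minimising sequence of `n`-tuples of centres. Passing to a subsequence, each coordinate
either converges or escapes to infinity (Bolzano–Weierstrass in a proper space). The limits of the
convergent coordinates form a set of at most `n` centres: pointwise, the escaping centres drop out
of the minimum defining `d(x, α)`, so by Fatou's lemma this set has distortion at most the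
infimum. Distances are taken in `ℝ≥0∞`, where `d(x, ∅) = ∞`, so the case in which every coordinate
escapes needs no separate treatment. The moment condition makes the distortion of every nonempty
finite set finite, which excludes the empty set and identifies the distortion with the real
integral in `quantError`.
-/

open Set Topology Bornology

lemma Finset.Nonempty.exists_range_eq_of_card_le {E : Type*} {β : Finset E} (hβ : β.Nonempty)
    {n : ℕ} (hn : β.card ≤ n) : ∃ a : Fin n → E, Set.range a = β := by
  have := hβ.coe_sort
  let f : β ↪ Fin n := β.equivFin.toEmbedding.trans (Fin.castLEEmb hn)
  refine ⟨Subtype.val ∘ Function.invFun f, ?_⟩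
  rw [range_comp, (Function.invFun_surjective f.injective).range_eq, image_univ,
    Subtype.range_coe]

lemma exists_strictMono_forall_of_finite {ι α : Type*} [Finite ι] (p : ι → (ℕ → α) → Prop)
    (hcomp : ∀ i u (φ : ℕ → ℕ), StrictMono φ → p i u → p i (u ∘ φ))
    (hex : ∀ i u, ∃ φ : ℕ → ℕ, StrictMono φ ∧ p i (u ∘ φ)) (u : ℕ → α) :
    ∃ φ : ℕ → ℕ, StrictMono φ ∧ ∀ i, p i (u ∘ φ) := by
  have := Fintype.ofFinite ι
  suffices ∀ s : Finset ι, ∃ φ : ℕ → ℕ, StrictMono φ ∧ ∀ i ∈ s, p i (u ∘ φ) by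
    simpa using this Finset.univ
  intro s
  induction s using Finset.cons_induction with
  | empty => exact ⟨id, strictMono_id, by simp⟩
  | cons a s _ ih =>
    obtain ⟨φ, hφ, hs⟩ := ih
    obtain ⟨ψ, hψ, ha⟩ := hex a (u ∘ φ)
    refine ⟨φ ∘ ψ, hφ.comp hψ, (Finset.forall_mem_cons _ _).2 ⟨ha, fun i hi => ?_⟩⟩
    exact hcomp i _ ψ hψ (hs i hi)

lemma exists_strictMono_tendsto_or_tendsto_cobounded {E : Type*} [PseudoMetricSpace E]
    [ProperSpace E] (u : ℕ → E) :
    ∃ φ : ℕ → ℕ, StrictMono φ ∧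
      ((∃ l, Tendsto (u ∘ φ) atTop (𝓝 l)) ∨ Tendsto (u ∘ φ) atTop (cobounded E)) := by
  by_cases h : Tendsto u atTop (cobounded E)
  · exact ⟨id, strictMono_id, Or.inr h⟩
  · obtain ⟨s, hs, hfreq⟩ := not_tendsto_iff_exists_frequently_notMem.1 h
    obtain ⟨l, -, φ, hφ, hl⟩ :=
      tendsto_subseq_of_frequently_bounded (isBounded_compl_iff.2 hs) hfreq
    exact ⟨φ, hφ, Or.inl ⟨l, hl⟩⟩

section Distortion

variable {E : Type*}

lemma infEDist_range_eq_iInf [PseudoEMetricSpace E] {ι : Type*} (x : E) (v : ι → E) :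
    infEDist x (range v) = ⨅ i, edist x (v i) := by
  simp only [← iUnion_singleton_eq_range, infEDist_iUnion, infEDist_singleton]

lemma tendsto_infEDist_range [PseudoMetricSpace E] {α ι : Type*} [Finite ι] {l : Filter α}
    {u : α → ι → E} {S : Set ι} {b : S → E}
    (hconv : ∀ i : S, Tendsto (fun k => u k i) l (𝓝 (b i)))
    (hdiv : ∀ i ∉ S, Tendsto (fun k => u k i) l (cobounded E)) (x : E) :
    Tendsto (fun k => infEDist x (range (u k))) l (𝓝 (infEDist x (range b))) := by
  have := Fintype.ofFinite ι
  simp only [infEDist_range_eq_iInf, iInf_subtype, ← Finset.inf_univ_eq_iInf]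
  refine Tendsto.finset_inf_nhds_apply fun i _ => ?_
  by_cases hi : i ∈ S
  · simpa only [hi, iInf_pos] using tendsto_const_nhds.edist (hconv ⟨i, hi⟩)
  · simp only [hi, not_false_eq_true, iInf_neg, edist_dist]
    exact ENNReal.tendsto_ofReal_atTop.comp
      ((tendsto_dist_left_cobounded_atTop x).comp (hdiv i hi))

/-- `∫ d(x, s)^r dP(x)` in `ℝ≥0∞`: the `r`-th power of the quantity minimised in `quantError`. -/
noncomputable def distortion [PseudoEMetricSpace E] [MeasurableSpace E] (P : Measure E) (r : ℝ)
    (s : Set E) : ℝ≥0∞ :=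
  ∫⁻ x, infEDist x s ^ r ∂P

theorem exists_finset_card_le_forall_distortion_le [PseudoMetricSpace E] [ProperSpace E]
    [MeasurableSpace E] [OpensMeasurableSpace E] [Nonempty E] (P : Measure E) (r : ℝ) (n : ℕ) :
    ∃ α : Finset E, α.card ≤ n ∧
      ∀ β : Finset E, β.Nonempty → β.card ≤ n → distortion P r α ≤ distortion P r β := by
  classical
  set D := fun a : Fin n → E => distortion P r (range a)
  obtain ⟨v, -, hv, hvD⟩ := exists_seq_tendsto_sInf (range_nonempty D) (OrderBot.bddBelow _)
  choose u hu using hvD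
  obtain ⟨φ, hφ, hdich⟩ := exists_strictMono_forall_of_finite
    (fun i (w : ℕ → Fin n → E) => (∃ l, Tendsto (fun k => w k i) atTop (𝓝 l)) ∨
      Tendsto (fun k => w k i) atTop (cobounded E))
    (fun i w ψ hψ h => h.imp (fun ⟨l, hl⟩ => ⟨l, hl.comp hψ.tendsto_atTop⟩)
      (fun h => h.comp hψ.tendsto_atTop))
    (fun i w => exists_strictMono_tendsto_or_tendsto_cobounded (fun k => w k i)) u
  set S := {i | ∃ l, Tendsto (fun k => u (φ k) i) atTop (𝓝 l)}
  choose b hb using fun i : S => i.2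
  have hdiv : ∀ i ∉ S, Tendsto (fun k => u (φ k) i) atTop (cobounded E) :=
    fun i hi => (hdich i).resolve_left hi
  refine ⟨Finset.univ.image b, ?_, fun β hβ hβn => ?_⟩
  · exact Finset.card_image_le.trans (by simpa using Fintype.card_subtype_le (· ∈ S))
  obtain ⟨a, ha⟩ := hβ.exists_range_eq_of_card_le hβn
  rw [Finset.coe_image, Finset.coe_univ, image_univ, ← ha]
  calc distortion P r (range b)
      = ∫⁻ x, liminf (fun k => infEDist x (range (u (φ k))) ^ r) atTop ∂P :=
        lintegral_congr fun x => ((ENNReal.continuous_rpow_const.tendsto _).comp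
          (tendsto_infEDist_range hb hdiv x)).liminf_eq.symm
    _ ≤ liminf (fun k => D (u (φ k))) atTop :=
        lintegral_liminf_le fun k => measurable_infEDist.pow_const r
    _ = sInf (range D) := by
        simpa only [Function.comp_def, hu] using (hv.comp hφ.tendsto_atTop).liminf_eq
    _ ≤ D a := sInf_le ⟨a, rfl⟩

end Distortion

section InfDistRpow

variable {E : Type*} [NormedAddCommGroup E] [MeasurableSpace E] [BorelSpace E]
  [SecondCountableTopology E] {P : Measure E} [IsFiniteMeasure P] {r : ℝ} {s : Set E}

lemma integrable_infDist_rpow (hr : 0 < r) (hmom : Integrable (fun x => ‖x‖ ^ r) P)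
    (hs : s.Nonempty) : Integrable (fun x => infDist x s ^ r) P := by
  obtain ⟨c, hc⟩ := hs
  have hp : ENNReal.ofReal r ≠ 0 := (ENNReal.ofReal_pos.2 hr).ne'
  have hid : MemLp id (ENNReal.ofReal r) P :=
    (integrable_norm_rpow_iff aestronglyMeasurable_id hp ENNReal.ofReal_ne_top).1
      (by simpa only [ENNReal.toReal_ofReal hr.le, id] using hmom)
  have hsub := (hid.sub (memLp_const c)).integrable_norm_rpow hp ENNReal.ofReal_ne_top
  rw [ENNReal.toReal_ofReal hr.le] at hsub
  have hmeas : Continuous fun x => infDist x s ^ r :=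
    (continuous_infDist_pt s).rpow_const fun _ => Or.inr hr.le
  refine hsub.mono' hmeas.aestronglyMeasurable (ae_of_all _ fun x => ?_)
  rw [Real.norm_of_nonneg (Real.rpow_nonneg infDist_nonneg r), Pi.sub_apply, id, ← dist_eq_norm]
  exact Real.rpow_le_rpow infDist_nonneg (infDist_le_dist_of_mem hc) hr.le

lemma ofReal_integral_infDist_rpow (hr : 0 < r) (hmom : Integrable (fun x => ‖x‖ ^ r) P)
    (hs : s.Nonempty) : ENNReal.ofReal (∫ x, infDist x s ^ r ∂P) = distortion P r s := by
  rw [ofReal_integral_eq_lintegral_ofReal (integrable_infDist_rpow hr hmom hs)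
    (ae_of_all _ fun x => Real.rpow_nonneg infDist_nonneg r)]
  refine lintegral_congr fun x => ?_
  rw [← ENNReal.ofReal_rpow_of_nonneg infDist_nonneg hr.le, infDist,
    ENNReal.ofReal_toReal (infEDist_ne_top hs)]

end InfDistRpow

lemma distortion_empty {E : Type*} [PseudoEMetricSpace E] [MeasurableSpace E] {P : Measure E}
    [NeZero P] {r : ℝ} (hr : 0 < r) : distortion P r ∅ = ⊤ := by
  simp [distortion, ENNReal.top_rpow_of_pos hr, ENNReal.top_mul, NeZero.ne P]

/-- For `r ∈ (0,∞)` and a Borel probability measure `P` on `ℝ^q` with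
`∫ |x|^r dP < ∞`, for every `n ≥ 1` there is a set `α` with `1 ≤ card α ≤ n` attaining
the `n`-th quantization error; in particular `C_{n,r}(P) ≠ ∅`. -/
theorem exists_optimal_set (q : ℕ) (r : ℝ) (hr : 0 < r)
    (P : Measure (EuclideanSpace ℝ (Fin q))) [IsProbabilityMeasure P]
    (hmom : Integrable (fun x => ‖x‖ ^ r) P) (n : ℕ) (hn : 1 ≤ n) :
    ∃ α : Finset (EuclideanSpace ℝ (Fin q)), 1 ≤ α.card ∧ α.card ≤ n ∧
      (∫ x, infDist x (↑α : Set (EuclideanSpace ℝ (Fin q))) ^ r ∂P) ^ (1 / r) =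
        quantError P r n := by
  obtain ⟨α, hαn, hmin⟩ := exists_finset_card_le_forall_distortion_le P r n
  have hα : α.Nonempty := by
    rw [Finset.nonempty_iff_ne_empty]
    rintro rfl
    have h0 := hmin {0} (Finset.singleton_nonempty 0) (by simpa using hn)
    rw [Finset.coe_empty, distortion_empty hr, top_le_iff,
      ← ofReal_integral_infDist_rpow hr hmom (Finset.singleton_nonempty 0)] at h0
    exact ENNReal.ofReal_ne_top h0
  have hI (s : Set (EuclideanSpace ℝ (Fin q))) : 0 ≤ ∫ x, infDist x s ^ r ∂P :=
    integral_nonneg fun x => Real.rpow_nonneg infDist_nonneg r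
  refine ⟨α, hα.card_pos, hαn, Eq.symm (IsLeast.csInf_eq ⟨⟨α, hα.card_pos, hαn, rfl⟩, ?_⟩)⟩
  rintro _ ⟨β, hβ, hβn, rfl⟩
  have hβ' := Finset.card_pos.1 hβ
  refine Real.rpow_le_rpow (hI α) ?_ (by positivity)
  rw [← ENNReal.ofReal_le_ofReal_iff (hI β), ofReal_integral_infDist_rpow hr hmom hα,
    ofReal_integral_infDist_rpow hr hmom hβ']
  exact hmin β hβ' hβn
end

section
/- Let r ∈ (0,∞) and let μ be a Borel probability measure on ℝ^q with compact support. Then dim_H^* μ ≤ D̲_r(μ), where dim_H^* μ := inf { dim_H(A) : A ⊆ ℝ^q Borel, μ(A) = 1 } is the (upper) Hausdorff dimension of the measure μ and dim_H denotes Hausdorff dimension. -/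
/-!
If `D̲_r(μ) < s < u < t`, then along a sequence `n_k ≥ 2 ^ k` there are codebooks `α_k` with
`n_k` points and `∫ d(x, α_k)^r dμ < n_k^(-r/s)`. By Markov's inequality the sets
`{x | d(x, α_k) > n_k^(-1/u)}` have summable measures, so by Borel–Cantelli `μ`-almost every
point lies eventually within `δ_k = n_k^(-1/u)` of `α_k`. That set is covered by `n_k` balls of
radius `δ_k`, and `n_k δ_k^t = n_k^(1 - t/u) → 0`, so it has Hausdorff dimension at most `t`.

The compact support is what makes `D̲_r(μ)` a genuine `liminf` in `ℝ` rather than a junk value: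
a grid of `m ^ q` points gives `e_{m^q, r}(μ) ≤ √q R / m`, which keeps the ratios
`log n / (-log e_{n,r}(μ))` frequently bounded and forces `e_{n,r}(μ) → 0`.
-/

open MeasureTheory Filter Metric
open scoped ENNReal NNReal

open scoped Topology

section QuantError

variable {E : Type*} [MetricSpace E] [MeasurableSpace E] {μ : Measure E} {r : ℝ}

lemma bddBelow_quantError_set (μ : Measure E) (r : ℝ) (n : ℕ) :
    BddBelow {e : ℝ | ∃ α : Finset E, 1 ≤ α.card ∧ α.card ≤ n ∧
      e = (∫ x, infDist x (↑α : Set E) ^ r ∂μ) ^ (1 / r)} := by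
  refine ⟨0, ?_⟩
  rintro e ⟨α, -, -, rfl⟩
  exact Real.rpow_nonneg (integral_nonneg fun x => Real.rpow_nonneg infDist_nonneg _) _

lemma nonempty_quantError_set [Nonempty E] (μ : Measure E) (r : ℝ) {n : ℕ} (hn : 1 ≤ n) :
    {e : ℝ | ∃ α : Finset E, 1 ≤ α.card ∧ α.card ≤ n ∧
      e = (∫ x, infDist x (↑α : Set E) ^ r ∂μ) ^ (1 / r)}.Nonempty :=
  ⟨_, {Classical.arbitrary E}, le_rfl, by simpa using hn, rfl⟩

lemma quantError_nonneg (μ : Measure E) (r : ℝ) (n : ℕ) : 0 ≤ quantError μ r n :=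
  Real.sInf_nonneg fun _ ⟨_, _, _, he⟩ =>
    he ▸ Real.rpow_nonneg (integral_nonneg fun _ => Real.rpow_nonneg infDist_nonneg _) _

lemma quantError_le {n : ℕ} {α : Finset E} (hα : α.Nonempty) (hn : α.card ≤ n) :
    quantError μ r n ≤ (∫ x, infDist x (↑α : Set E) ^ r ∂μ) ^ (1 / r) :=
  csInf_le (bddBelow_quantError_set μ r n) ⟨α, hα.card_pos, hn, rfl⟩

lemma quantError_antitoneOn [Nonempty E] (μ : Measure E) (r : ℝ) :
    AntitoneOn (quantError μ r) (Set.Ici 1) := fun _ hn _ _ hnm =>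
  csInf_le_csInf (bddBelow_quantError_set μ r _) (nonempty_quantError_set μ r hn)
    fun _ ⟨α, h1, h2, he⟩ => ⟨α, h1, h2.trans hnm, he⟩

lemma exists_finset_integral_lt_of_quantError_lt [Nonempty E] (hr : 0 < r) {n : ℕ}
    (hn : 1 ≤ n) {ε : ℝ} (h : quantError μ r n < ε) :
    ∃ α : Finset E, α.Nonempty ∧ α.card ≤ n ∧
      ∫ x, infDist x (↑α : Set E) ^ r ∂μ < ε ^ r := by
  obtain ⟨_, ⟨α, h1, h2, rfl⟩, hα⟩ :=
    exists_lt_of_csInf_lt (nonempty_quantError_set μ r hn) h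
  refine ⟨α, Finset.card_pos.1 h1, h2, ?_⟩
  have hI : 0 ≤ ∫ x, infDist x (↑α : Set E) ^ r ∂μ :=
    integral_nonneg fun _ => Real.rpow_nonneg infDist_nonneg _
  rwa [← Real.rpow_inv_lt_iff_of_pos hI ((quantError_nonneg μ r n).trans h.le) hr, ← one_div]

lemma quantError_le_of_ae_infDist_le [IsProbabilityMeasure μ] (hr : 0 < r) {n : ℕ}
    {α : Finset E} (hα : α.Nonempty) (hn : α.card ≤ n) {ε : ℝ} (hε : 0 ≤ ε)
    (h : ∀ᵐ x ∂μ, infDist x (↑α : Set E) ≤ ε) : quantError μ r n ≤ ε := by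
  have hI : ∫ x, infDist x (↑α : Set E) ^ r ∂μ ≤ ε ^ r := by
    simpa using integral_mono_of_nonneg (ae_of_all _ fun _ => Real.rpow_nonneg infDist_nonneg _)
      (integrable_const (ε ^ r)) (h.mono fun _ hx => Real.rpow_le_rpow infDist_nonneg hx hr.le)
  calc quantError μ r n ≤ (∫ x, infDist x (↑α : Set E) ^ r ∂μ) ^ (1 / r) :=
        quantError_le hα hn
    _ ≤ (ε ^ r) ^ (1 / r) := by
        gcongr
        exact integral_nonneg fun _ => Real.rpow_nonneg infDist_nonneg _
    _ = ε := by rw [one_div, Real.rpow_rpow_inv hε hr.ne']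

lemma integrable_infDist_rpow_s3 [OpensMeasurableSpace E] [IsFiniteMeasure μ] (hr : 0 ≤ r)
    {K : Set E} (hK : Bornology.IsBounded K) (hμK : μ Kᶜ = 0) {α : Set E} (hα : α.Nonempty) :
    Integrable (fun x => infDist x α ^ r) μ := by
  obtain ⟨a, ha⟩ := hα
  obtain ⟨R, hR⟩ := hK.subset_closedBall a
  refine Integrable.of_bound
    ((continuous_infDist_pt α).rpow_const fun _ => Or.inr hr).aestronglyMeasurable (R ^ r) ?_
  filter_upwards [mem_ae_iff.2 hμK] with x hx
  rw [Real.norm_of_nonneg (Real.rpow_nonneg infDist_nonneg _)]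
  exact Real.rpow_le_rpow infDist_nonneg ((infDist_le_dist_of_mem ha).trans (hR hx)) hr

lemma measure_lt_infDist_le [IsFiniteMeasure μ] (hr : 0 < r) {α : Set E}
    (hint : Integrable (fun x => infDist x α ^ r) μ) {δ : ℝ} (hδ : 0 < δ) :
    μ {x | δ < infDist x α} ≤ ENNReal.ofReal ((∫ x, infDist x α ^ r ∂μ) / δ ^ r) := by
  have hδr : 0 < δ ^ r := Real.rpow_pos_of_pos hδ r
  calc μ {x | δ < infDist x α} ≤ μ {x | δ ^ r ≤ infDist x α ^ r} :=
        measure_mono fun x hx => Real.rpow_le_rpow hδ.le (le_of_lt hx) hr.le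
    _ = ENNReal.ofReal (μ.real {x | δ ^ r ≤ infDist x α ^ r}) := by
        rw [measureReal_def, ENNReal.ofReal_toReal (measure_ne_top μ _)]
    _ ≤ ENNReal.ofReal ((∫ x, infDist x α ^ r ∂μ) / δ ^ r) := by
        refine ENNReal.ofReal_le_ofReal ((le_div_iff₀' hδr).2 ?_)
        exact mul_meas_ge_le_integral_of_nonneg
          (ae_of_all _ fun _ => Real.rpow_nonneg infDist_nonneg _) hint _

end QuantError

lemma exists_fin_abs_sub_le {R y : ℝ} (hR : 0 < R) (hy : |y| ≤ R) {m : ℕ} (hm : 1 ≤ m) :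
    ∃ j : Fin m, |y - (2 * j + 1 - m) * R / m| ≤ R / m := by
  have hm₀ : (0 : ℝ) < m := by exact_mod_cast hm
  obtain ⟨hy₁, hy₂⟩ := abs_le.1 hy
  set z := (y + R) * m / (2 * R)
  have hz₀ : 0 ≤ z := div_nonneg (mul_nonneg (by linarith) hm₀.le) (by positivity)
  have hzm : z ≤ m := by
    rw [div_le_iff₀ (by positivity)]
    nlinarith
  refine ⟨⟨min ⌊z⌋₊ (m - 1), by omega⟩, ?_⟩
  have hjz : ((min ⌊z⌋₊ (m - 1) : ℕ) : ℝ) ≤ z :=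
    (Nat.cast_le.2 (min_le_left _ _)).trans (Nat.floor_le hz₀)
  have hzj : z ≤ ((min ⌊z⌋₊ (m - 1) : ℕ) : ℝ) + 1 := by
    rcases le_total ⌊z⌋₊ (m - 1) with h | h
    · rw [min_eq_left h]
      exact (Nat.lt_floor_add_one z).le
    · rw [min_eq_right h, Nat.cast_sub hm, Nat.cast_one, sub_add_cancel]
      exact hzm
  have hyz : y - (2 * ((min ⌊z⌋₊ (m - 1) : ℕ) : ℝ) + 1 - m) * R / m =
      R / m * (2 * (z - (min ⌊z⌋₊ (m - 1) : ℕ)) - 1) := by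
    simp only [z]
    field_simp
    ring
  rw [Fin.val_mk, hyz, abs_mul, abs_of_pos (by positivity)]
  exact mul_le_of_le_one_right (by positivity) (abs_le.2 ⟨by linarith, by linarith⟩)

lemma exists_finset_card_le_pow_infDist_le (q : ℕ) {R : ℝ} (hR : 0 < R) {m : ℕ}
    (hm : 1 ≤ m) :
    ∃ α : Finset (EuclideanSpace ℝ (Fin q)), α.Nonempty ∧ α.card ≤ m ^ q ∧
      ∀ x ∈ closedBall (0 : EuclideanSpace ℝ (Fin q)) R,
        infDist x (α : Set (EuclideanSpace ℝ (Fin q))) ≤ √q * R / m := by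
  classical
  have : Nonempty (Fin m) := ⟨⟨0, hm⟩⟩
  let g : (Fin q → Fin m) → EuclideanSpace ℝ (Fin q) :=
    fun v => WithLp.toLp 2 fun i => (2 * v i + 1 - m) * R / m
  refine ⟨Finset.univ.image g, Finset.univ_nonempty.image g,
    Finset.card_image_le.trans (by simp), fun x hx => ?_⟩
  choose v hv using fun i => exists_fin_abs_sub_le hR
    ((Real.norm_eq_abs (x i) ▸ PiLp.norm_apply_le x i).trans (mem_closedBall_zero_iff.1 hx)) hm
  refine (infDist_le_dist_of_mem (Finset.mem_coe.2 (Finset.mem_image_of_mem g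
    (Finset.mem_univ v)))).trans ?_
  rw [EuclideanSpace.dist_eq]
  calc √(∑ i, dist (x i) (g v i) ^ 2) ≤ √(∑ _i : Fin q, (R / m) ^ 2) := by
        gcongr with i
        exact hv i
    _ = √q * R / m := by
        rw [Finset.sum_const, Finset.card_univ, Fintype.card_fin, nsmul_eq_mul,
          Real.sqrt_mul q.cast_nonneg, Real.sqrt_sq (by positivity), mul_div_assoc]

lemma quantError_pow_le_of_measure_compl_closedBall {q : ℕ}
    {μ : Measure (EuclideanSpace ℝ (Fin q))} [IsProbabilityMeasure μ] {r : ℝ} (hr : 0 < r)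
    {R : ℝ} (hR : 0 < R) (hμR : μ (closedBall 0 R)ᶜ = 0) {m : ℕ} (hm : 1 ≤ m) :
    quantError μ r (m ^ q) ≤ √q * R / m := by
  obtain ⟨α, hα, hcard, hcov⟩ := exists_finset_card_le_pow_infDist_le q hR hm
  exact quantError_le_of_ae_infDist_le hr hα hcard (by positivity)
    (Eventually.mono (mem_ae_iff.2 hμR) hcov)

lemma log_pow_div_neg_log_le {m C e : ℝ} (q : ℕ) (hm : 1 < m) (hCm : C ^ 2 ≤ m) (hC : 0 < C)
    (he : 0 ≤ e) (heC : e ≤ C / m) : Real.log (m ^ q) / -Real.log e ≤ 2 * q := by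
  rcases he.eq_or_lt with rfl | he
  · simp
  have hlogm : 0 < Real.log m := Real.log_pos hm
  have hlogC : 2 * Real.log C ≤ Real.log m := by
    simpa [Real.log_pow] using Real.log_le_log (by positivity) hCm
  have hloge : Real.log e ≤ Real.log C - Real.log m := by
    rw [← Real.log_div hC.ne' (by linarith)]
    exact Real.log_le_log he heC
  rw [Real.log_pow, div_le_iff₀ (by linarith)]
  nlinarith [q.cast_nonneg (α := ℝ)]

lemma lt_rpow_neg_inv_of_log_div_neg_log_lt {x e s : ℝ} (hx : 0 < x) (he₀ : 0 ≤ e)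
    (he₁ : e < 1) (hs : 0 < s) (h : Real.log x / -Real.log e < s) : e < x ^ (-s⁻¹) := by
  rcases he₀.eq_or_lt with rfl | he₀
  · exact Real.rpow_pos_of_pos hx _
  have hloge : 0 < -Real.log e := neg_pos.2 (Real.log_neg he₀ he₁)
  rw [← Real.log_lt_log_iff he₀ (Real.rpow_pos_of_pos hx _), Real.log_rpow hx, neg_mul,
    inv_mul_eq_div, lt_neg, div_lt_iff₀ hs]
  rwa [div_lt_iff₀ hloge, mul_comm] at h

section QuantDecay

variable {E : Type*} [MetricSpace E] [MeasurableSpace E] [Nonempty E] {μ : Measure E} {r : ℝ}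
  {q : ℕ} {C : ℝ}

lemma tendsto_quantError_atTop_zero
    (h : ∀ m : ℕ, 1 ≤ m → quantError μ r (m ^ q) ≤ C / m) :
    Tendsto (quantError μ r) atTop (𝓝 0) := by
  refine tendsto_order.2 ⟨fun a ha => Eventually.of_forall fun n =>
    ha.trans_le (quantError_nonneg μ r n), fun ε hε => ?_⟩
  obtain ⟨m, hm⟩ := exists_nat_gt (C / ε)
  have hm₁ : 1 ≤ (m + 1) ^ q := Nat.one_le_pow _ _ m.succ_pos
  refine eventually_atTop.2 ⟨(m + 1) ^ q, fun n hn => ?_⟩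
  calc quantError μ r n ≤ quantError μ r ((m + 1) ^ q) :=
        quantError_antitoneOn μ r hm₁ (hm₁.trans hn : 1 ≤ n) hn
    _ ≤ C / (m + 1 : ℕ) := h _ m.succ_pos
    _ < ε := by
        rw [div_lt_iff₀ (by positivity)]
        push_cast
        rw [div_lt_iff₀ hε] at hm
        linarith

lemma isCoboundedUnder_ge_log_div_neg_log_quantError
    (h : ∀ m : ℕ, 1 ≤ m → quantError μ r (m ^ q) ≤ C / m) :
    IsCoboundedUnder (· ≥ ·) atTop
      fun n : ℕ => Real.log n / -Real.log (quantError μ r n) := by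
  refine IsCoboundedUnder.of_frequently_le (a := 2 * (q + 1 : ℕ)) (frequently_atTop.2 fun N => ?_)
  set C' := max C 1
  obtain ⟨m, hm⟩ := exists_nat_gt (max (N : ℝ) (C' ^ 2))
  have hmC : C' ^ 2 < m := (le_max_right _ _).trans_lt hm
  have hm₁ : (1 : ℝ) < m := (one_le_pow₀ (le_max_right C 1)).trans_lt hmC
  have hm₁' : 1 ≤ m := by exact_mod_cast hm₁.le
  -- the exponent `q + 1` makes `m ^ (q + 1)` unbounded even when `q = 0`
  refine ⟨m ^ (q + 1), ?_, ?_⟩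
  · have hNm : N ≤ m := by exact_mod_cast (le_max_left _ _).trans hm.le
    exact hNm.trans (Nat.le_self_pow q.succ_ne_zero m)
  · have he : quantError μ r (m ^ (q + 1)) ≤ C' / m :=
      (quantError_antitoneOn μ r (Nat.one_le_pow _ _ hm₁') (Nat.one_le_pow _ _ hm₁')
        (Nat.pow_le_pow_right hm₁' q.le_succ)).trans
        ((h m hm₁').trans (by gcongr; exact le_max_left C 1))
    rw [Nat.cast_pow]
    exact log_pow_div_neg_log_le (q + 1) hm₁ hmC.le (by positivity) (quantError_nonneg μ r _) he

end QuantDecay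

section Hausdorff

variable {E : Type*} [MetricSpace E] [MeasurableSpace E] [BorelSpace E]

lemma hausdorffMeasure_eq_zero_of_eventually_infDist_le {S : Set E} {t : ℝ} (ht : 0 ≤ t)
    {α : ℕ → Finset E} (hα : ∀ k, (α k).Nonempty) {δ : ℕ → ℝ}
    (hδ₀ : ∀ k, 0 ≤ δ k) (hδ : Tendsto δ atTop (𝓝 0))
    (hsum : Tendsto (fun k => (α k).card * δ k ^ t) atTop (𝓝 0))
    (hS : ∀ᶠ k in atTop, ∀ x ∈ S, infDist x (α k : Set E) ≤ δ k) :
    μH[t] S = 0 := by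
  have hcover : ∀ᶠ k in atTop, S ⊆ ⋃ a : α k, closedBall (a : E) (δ k) := by
    refine hS.mono fun k hk x hx => ?_
    obtain ⟨a, ha, hxa⟩ := (α k).finite_toSet.isCompact.exists_infDist_eq_dist
      (Finset.coe_nonempty.2 (hα k)) x
    exact Set.mem_iUnion.2 ⟨⟨a, ha⟩, mem_closedBall.2 (hxa ▸ hk x hx)⟩
  have hdiam : ∀ k (a : α k), ediam (closedBall (a : E) (δ k)) ≤ ENNReal.ofReal (2 * δ k) :=
    fun k a => ediam_le_of_forall_dist_le fun x hx y hy => by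
      linarith [dist_triangle_right x y (a : E), mem_closedBall.1 hx, mem_closedBall.1 hy]
  have hsum_le : ∀ k, ∑ a : α k, ediam (closedBall (a : E) (δ k)) ^ t ≤
      ENNReal.ofReal (2 ^ t * ((α k).card * δ k ^ t)) := by
    intro k
    calc ∑ a : α k, ediam (closedBall (a : E) (δ k)) ^ t
        ≤ ∑ _a : α k, ENNReal.ofReal (2 * δ k) ^ t := by
          gcongr with a
          exact hdiam k a
      _ = ENNReal.ofReal (2 ^ t * ((α k).card * δ k ^ t)) := by
          rw [Finset.sum_const, Finset.card_univ, Fintype.card_coe, nsmul_eq_mul,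
            ENNReal.ofReal_rpow_of_nonneg (by linarith [hδ₀ k]) ht,
            Real.mul_rpow zero_le_two (hδ₀ k), mul_left_comm,
            ENNReal.ofReal_mul (Nat.cast_nonneg _), ENNReal.ofReal_natCast]
  have hlim :
      Tendsto (fun k => ENNReal.ofReal (2 ^ t * ((α k).card * δ k ^ t))) atTop (𝓝 0) := by
    simpa using ENNReal.tendsto_ofReal (hsum.const_mul (2 ^ t))
  refine le_antisymm ?_ zero_le
  calc μH[t] S ≤ liminf (fun k => ∑ a : α k, ediam (closedBall (a : E) (δ k)) ^ t) atTop :=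
        Measure.hausdorffMeasure_le_liminf_sum t S _
          (by simpa using ENNReal.tendsto_ofReal (hδ.const_mul 2)) _
          (Eventually.of_forall hdiam) hcover
    _ ≤ liminf (fun k => ENNReal.ofReal (2 ^ t * ((α k).card * δ k ^ t))) atTop :=
        liminf_le_liminf (Eventually.of_forall hsum_le)
    _ = 0 := hlim.liminf_eq

lemma dimH_liminf_infDist_le {t : ℝ} (ht : 0 ≤ t)
    {α : ℕ → Finset E} (hα : ∀ k, (α k).Nonempty) {δ : ℕ → ℝ}
    (hδ₀ : ∀ k, 0 ≤ δ k) (hδ : Tendsto δ atTop (𝓝 0))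
    (hsum : Tendsto (fun k => (α k).card * δ k ^ t) atTop (𝓝 0)) :
    dimH (liminf (fun k => {x | infDist x (α k : Set E) ≤ δ k}) atTop) ≤
      ENNReal.ofReal t := by
  simp only [liminf_eq_iSup_iInf_of_nat, Set.iSup_eq_iUnion, Set.iInf_eq_iInter, dimH_iUnion]
  refine iSup_le fun m => dimH_le_of_hausdorffMeasure_ne_top (d := t.toNNReal) ?_
  rw [Real.coe_toNNReal t ht]
  refine ne_top_of_le_ne_top ENNReal.zero_ne_top
    (hausdorffMeasure_eq_zero_of_eventually_infDist_le ht hα hδ₀ hδ hsum ?_).le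
  exact (eventually_ge_atTop m).mono fun k hk x hx => Set.mem_iInter₂.1 hx k hk

end Hausdorff

lemma summable_rpow_neg_of_two_pow_le {n : ℕ → ℕ} (hn : ∀ k, 2 ^ k ≤ n k) {c : ℝ}
    (hc : 0 < c) :
    Summable fun k => (n k : ℝ) ^ (-c) := by
  refine Summable.of_nonneg_of_le (fun k => Real.rpow_nonneg (Nat.cast_nonneg _) _) (fun k => ?_)
    (summable_geometric_of_lt_one (Real.rpow_nonneg zero_le_two _)
      (Real.rpow_lt_one_of_one_lt_of_neg one_lt_two (neg_neg_of_pos hc)))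
  rw [Real.rpow_pow_comm zero_le_two]
  exact Real.rpow_le_rpow_of_nonpos (by positivity) (by exact_mod_cast hn k) (neg_nonpos.2 hc.le)

lemma exists_measurableSet_dimH_le_of_integral_infDist_le {E : Type*} [MetricSpace E]
    [MeasurableSpace E] [BorelSpace E] {μ : Measure E} [IsFiniteMeasure μ] {r s t : ℝ}
    (hr : 0 < r) (hs : 0 < s) (hst : s < t) {n : ℕ → ℕ} (hn : ∀ k, 2 ^ k ≤ n k)
    {α : ℕ → Finset E} (hα : ∀ k, (α k).Nonempty) (hcard : ∀ k, (α k).card ≤ n k)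
    (hint : ∀ k, Integrable (fun x => infDist x (α k : Set E) ^ r) μ)
    (hI : ∀ k, ∫ x, infDist x (α k : Set E) ^ r ∂μ ≤ (n k : ℝ) ^ (-(r / s))) :
    ∃ A, MeasurableSet A ∧ μ Aᶜ = 0 ∧ dimH A ≤ ENNReal.ofReal t := by
  set u := (s + t) / 2
  have hsu : s < u := by simp only [u]; linarith
  have hut : u < t := by simp only [u]; linarith
  have hu : 0 < u := hs.trans hsu
  have hn₀ : ∀ k, 0 < (n k : ℝ) := fun k => by exact_mod_cast Nat.one_le_two_pow.trans (hn k)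
  -- `s < u < t`: the radius `δ k` is large enough for Markov's inequality to give a summable
  -- bound, and small enough for `n k` balls of radius `δ k` to have vanishing `t`-dimensional sums
  set δ : ℕ → ℝ := fun k => (n k : ℝ) ^ (-u⁻¹)
  have hδ₀ : ∀ k, 0 < δ k := fun k => Real.rpow_pos_of_pos (hn₀ k) _
  set G : ℕ → Set E := fun k => {x | infDist x (α k : Set E) ≤ δ k}
  have hbad : ∀ k, μ (G k)ᶜ ≤ ENNReal.ofReal ((n k : ℝ) ^ (-(r / s - r / u))) := by
    intro k
    simp only [G, Set.compl_ofPred, not_le]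
    refine (measure_lt_infDist_le hr (hint k) (hδ₀ k)).trans (ENNReal.ofReal_le_ofReal ?_)
    rw [neg_sub', Real.rpow_sub (hn₀ k), ← Real.rpow_mul (hn₀ k).le, neg_mul, inv_mul_eq_div]
    gcongr
    exact hI k
  have hcover : ∀ k, (α k).card * δ k ^ t ≤ (n k : ℝ) ^ (-(t / u - 1)) := by
    intro k
    rw [neg_sub, Real.rpow_sub (hn₀ k), Real.rpow_one, ← Real.rpow_mul (hn₀ k).le, neg_mul,
      inv_mul_eq_div, Real.rpow_neg (hn₀ k).le, ← div_eq_mul_inv]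
    gcongr
    exact_mod_cast hcard k
  refine ⟨liminf G atTop, MeasurableSet.measurableSet_liminf fun k =>
    (isClosed_le (continuous_infDist_pt _) continuous_const).measurableSet, ?_, ?_⟩
  · rw [liminf_compl]
    refine measure_limsup_atTop_eq_zero (ne_top_of_le_ne_top ?_ (ENNReal.tsum_le_tsum hbad))
    rw [← ENNReal.ofReal_tsum_of_nonneg (fun k => Real.rpow_nonneg (hn₀ k).le _)
      (summable_rpow_neg_of_two_pow_le hn (sub_pos.2 (div_lt_div_of_pos_left hr hs hsu)))]
    exact ENNReal.ofReal_ne_top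
  · refine dimH_liminf_infDist_le (hs.trans hst).le hα (fun k => (hδ₀ k).le)
      (summable_rpow_neg_of_two_pow_le hn (inv_pos.2 hu)).tendsto_atTop_zero ?_
    refine squeeze_zero (fun k => by have := hδ₀ k; positivity) hcover ?_
    exact (summable_rpow_neg_of_two_pow_le hn
      (sub_pos.2 ((one_lt_div hu).2 hut))).tendsto_atTop_zero

lemma exists_measurableSet_dimH_le_of_lowerQuantDim_lt {E : Type*} [MetricSpace E]
    [MeasurableSpace E] [BorelSpace E] {μ : Measure E} [IsProbabilityMeasure μ] {r : ℝ}
    (hr : 0 < r) {K : Set E} (hK : Bornology.IsBounded K) (hμK : μ Kᶜ = 0) {q : ℕ} {C : ℝ}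
    (h : ∀ m : ℕ, 1 ≤ m → quantError μ r (m ^ q) ≤ C / m) {t : ℝ} (ht : 0 < t)
    (hDt : lowerQuantDim μ r < t) :
    ∃ A, MeasurableSet A ∧ μ A = 1 ∧ dimH A ≤ ENNReal.ofReal t := by
  have := nonempty_of_isProbabilityMeasure μ
  obtain ⟨s, hDs, hst⟩ := exists_between (max_lt hDt ht)
  have hs : 0 < s := (le_max_right _ _).trans_lt hDs
  have hfreq : ∃ᶠ n : ℕ in atTop, quantError μ r n < (n : ℝ) ^ (-s⁻¹) := by
    have hlt : ∃ᶠ n : ℕ in atTop, Real.log n / -Real.log (quantError μ r n) < s :=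
      frequently_lt_of_liminf_lt (isCoboundedUnder_ge_log_div_neg_log_quantError h)
        ((le_max_left _ _).trans_lt hDs)
    have hsmall : ∀ᶠ n in atTop, quantError μ r n < 1 :=
      (tendsto_quantError_atTop_zero h).eventually (gt_mem_nhds one_pos)
    refine (hlt.and_eventually (hsmall.and (eventually_ge_atTop 1))).mono ?_
    rintro n ⟨hn, he, hn₁⟩
    exact lt_rpow_neg_inv_of_log_div_neg_log_lt (by exact_mod_cast hn₁) (quantError_nonneg μ r n)
      he hs hn
  choose n hn hen using fun k : ℕ => frequently_atTop.1 hfreq (2 ^ k)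
  choose α hα hcard hI using fun k =>
    exists_finset_integral_lt_of_quantError_lt hr (Nat.one_le_two_pow.trans (hn k)) (hen k)
  obtain ⟨A, hA, hμA, hdim⟩ :=
    exists_measurableSet_dimH_le_of_integral_infDist_le hr hs hst hn hα hcard
      (fun k => integrable_infDist_rpow_s3 hr.le hK hμK (Finset.coe_nonempty.2 (hα k)))
    fun k => (hI k).le.trans_eq <| by
      rw [← Real.rpow_mul (Nat.cast_nonneg _), neg_mul, inv_mul_eq_div]
  exact ⟨A, hA, (prob_compl_eq_zero_iff hA).1 hμA, hdim⟩

/-- for a compactly supported Borel probability measure `μ` on `ℝ^q` and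
`r ∈ (0,∞)`, the Hausdorff dimension of the measure,
`dim_H^* μ = inf { dim_H A : A Borel, μ(A) = 1 }`, is bounded by the lower quantization
dimension of order `r`. -/
theorem hausdorffDim_le_lowerQuantDim (q : ℕ) (r : ℝ) (hr : 0 < r)
    (μ : Measure (EuclideanSpace ℝ (Fin q))) [IsProbabilityMeasure μ]
    (K : Set (EuclideanSpace ℝ (Fin q))) (hK : IsCompact K) (hμK : μ Kᶜ = 0) :
    sInf {d : ℝ≥0∞ | ∃ A : Set (EuclideanSpace ℝ (Fin q)),
        MeasurableSet A ∧ μ A = 1 ∧ d = dimH A} ≤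
      ENNReal.ofReal (lowerQuantDim μ r) := by
  obtain ⟨R, hR, hKR⟩ := hK.isBounded.subset_closedBall_lt 0 0
  have hquant : ∀ m : ℕ, 1 ≤ m → quantError μ r (m ^ q) ≤ √q * R / m := fun m =>
    quantError_pow_le_of_measure_compl_closedBall hr hR
      (measure_mono_null (Set.compl_subset_compl.2 hKR) hμK)
  by_contra! hlt
  obtain ⟨t, -, hDt, htA⟩ := ENNReal.lt_iff_exists_real_btwn.1 hlt
  obtain ⟨hDt, ht⟩ := ENNReal.ofReal_lt_ofReal_iff'.1 hDt
  obtain ⟨A, hA, hμA, hdim⟩ :=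
    exists_measurableSet_dimH_le_of_lowerQuantDim_lt hr hK.isBounded hμK hquant ht hDt
  exact htA.not_ge (sInf_le_of_le ⟨A, hA, hμA, rfl⟩ hdim)
end

section
/- Stability of the upper quantization dimension under finite decompositions: Let r ∈ [1,∞) and let μ be a Borel probability measure on ℝ^q with ∫ |x|^r dμ(x) < ∞. Then D̄_r(μ) = inf { max_{1≤i≤n} D̄_r(μ_i) : n ∈ ℕ, μ = Σ_{i=1}^n s_i μ_i with s_i > 0 and each μ_i a Borel probability measure on ℝ^q with ∫ |x|^r dμ_i(x) < ∞ }. -/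
open MeasureTheory Filter Metric
open scoped ENNReal NNReal

namespace QD

variable {q : ℕ} {r : ℝ}

local notation "E" => EuclideanSpace ℝ (Fin q)

abbrev QSet (P : Measure E) (r : ℝ) (n : ℕ) : Set ℝ :=
  {e : ℝ | ∃ α : Finset E, 1 ≤ α.card ∧ α.card ≤ n ∧
    e = (∫ x, infDist x (↑α : Set E) ^ r ∂P) ^ (1 / r)}

lemma quantError_eq (P : Measure E) (n : ℕ) : quantError P r n = sInf (QSet P r n) := rfl

lemma qset_nonneg {P : Measure E} {n : ℕ} {e : ℝ} (he : e ∈ QSet P r n) : 0 ≤ e := by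
  obtain ⟨α, -, -, rfl⟩ := he
  exact Real.rpow_nonneg (integral_nonneg fun x => Real.rpow_nonneg infDist_nonneg r) _

lemma qset_bddBelow (P : Measure E) (n : ℕ) : BddBelow (QSet P r n) :=
  ⟨0, fun _ he => qset_nonneg he⟩

lemma qset_nonempty (P : Measure E) {n : ℕ} (hn : 1 ≤ n) : (QSet P r n).Nonempty := by
  refine ⟨_, ⟨{0}, ?_, ?_, rfl⟩⟩ <;> simp [hn]

lemma quantError_nonneg (P : Measure E) (n : ℕ) : 0 ≤ quantError P r n :=
  Real.sInf_nonneg fun _ he => qset_nonneg he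

lemma quantError_le (P : Measure E) {n : ℕ} {α : Finset E} (h1 : α.Nonempty)
    (h2 : α.card ≤ n) :
    quantError P r n ≤ (∫ x, infDist x (↑α : Set E) ^ r ∂P) ^ (1 / r) :=
  csInf_le (qset_bddBelow P n) ⟨α, h1.card_pos, h2, rfl⟩

lemma quantError_antitone (P : Measure E) {m n : ℕ} (hm : 1 ≤ m) (h : m ≤ n) :
    quantError P r n ≤ quantError P r m :=
  csInf_le_csInf (qset_bddBelow P n) (qset_nonempty P hm)
    fun e ⟨α, h1, h2, he⟩ => ⟨α, h1, h2.trans h, he⟩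

lemma exists_codebook (P : Measure E) {n : ℕ} (hn : 1 ≤ n) {ε : ℝ} (hε : 0 < ε) :
    ∃ α : Finset E, α.Nonempty ∧ α.card ≤ n ∧
      (∫ x, infDist x (↑α : Set E) ^ r ∂P) ^ (1 / r) < quantError P r n + ε := by
  obtain ⟨e, ⟨α, h1, h2, rfl⟩, hlt⟩ := Real.lt_sInf_add_pos (qset_nonempty P hn) hε
  exact ⟨α, Finset.card_pos.mp h1, h2, hlt⟩

lemma rpow_add_le {a b : ℝ} (ha : 0 ≤ a) (hb : 0 ≤ b) (hr : 0 ≤ r) :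
    (a + b) ^ r ≤ 2 ^ r * (a ^ r + b ^ r) := by
  have h1 : a + b ≤ 2 * max a b := by
    rcases le_total a b with h | h <;> simp [max_eq_right, max_eq_left, h] <;> nlinarith
  have h2 : (a + b) ^ r ≤ (2 * max a b) ^ r :=
    Real.rpow_le_rpow (by positivity) h1 hr
  have h3 : (2 * max a b) ^ r = 2 ^ r * (max a b) ^ r :=
    Real.mul_rpow (by norm_num) (le_max_of_le_left ha)
  have h4 : (max a b) ^ r ≤ a ^ r + b ^ r := by
    rcases le_total a b with h | h
    · rw [max_eq_right h]; nlinarith [Real.rpow_nonneg ha r]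
    · rw [max_eq_left h]; nlinarith [Real.rpow_nonneg hb r]
  calc (a + b) ^ r ≤ 2 ^ r * (max a b) ^ r := by rw [← h3]; exact h2
    _ ≤ 2 ^ r * (a ^ r + b ^ r) :=
      mul_le_mul_of_nonneg_left h4 (by positivity)

lemma integrable_infDist_rpow (hr : 1 ≤ r) (P : Measure E) [IsProbabilityMeasure P]
    (hmom : Integrable (fun x => ‖x‖ ^ r) P) {α : Finset E} (hα : α.Nonempty) :
    Integrable (fun x => infDist x (↑α : Set E) ^ r) P := by
  obtain ⟨a, ha⟩ := hα
  have hr0 : (0:ℝ) ≤ r := le_trans zero_le_one hr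
  have hcont : Continuous fun x : E => infDist x (↑α : Set E) ^ r :=
    (continuous_infDist_pt _).rpow_const fun x => Or.inr hr0
  have hg : Integrable (fun x : E => 2 ^ r * ‖x‖ ^ r + 2 ^ r * ‖a‖ ^ r) P :=
    (hmom.const_mul _).add (integrable_const _)
  refine hg.mono hcont.aestronglyMeasurable (ae_of_all _ fun x => ?_)
  have h1 : infDist x (↑α : Set E) ≤ ‖x‖ + ‖a‖ := by
    refine (infDist_le_dist_of_mem (by exact_mod_cast ha)).trans ?_
    rw [dist_eq_norm]; exact norm_sub_le _ _
  have h2 : infDist x (↑α : Set E) ^ r ≤ (‖x‖ + ‖a‖) ^ r :=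
    Real.rpow_le_rpow infDist_nonneg h1 hr0
  have h3 := rpow_add_le (norm_nonneg x) (norm_nonneg a) hr0
  rw [Real.norm_eq_abs, Real.norm_eq_abs, abs_of_nonneg (Real.rpow_nonneg infDist_nonneg r)]
  rw [abs_of_nonneg (by positivity)]
  calc infDist x (↑α : Set E) ^ r ≤ (‖x‖ + ‖a‖) ^ r := h2
    _ ≤ 2 ^ r * (‖x‖ ^ r + ‖a‖ ^ r) := h3
    _ = 2 ^ r * ‖x‖ ^ r + 2 ^ r * ‖a‖ ^ r := by ring


lemma exists_small_codebook (hr : 1 ≤ r) (P : Measure E) [IsProbabilityMeasure P]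
    (hmom : Integrable (fun x => ‖x‖ ^ r) P) {δ : ℝ} (hδ : 0 < δ) :
    ∃ α : Finset E, α.Nonempty ∧ ∫ x, infDist x (↑α : Set E) ^ r ∂P < δ := by
  have hr0 : (0:ℝ) ≤ r := le_trans zero_le_one hr
  have hA : ∀ m : ℕ, ∃ α : Finset E, (0:E) ∈ α ∧
      ∀ x : E, ‖x‖ ≤ m → infDist x (↑α : Set E) ≤ 1 / (m + 1) := by
    classical
    intro m
    obtain ⟨t, htfin, hcov⟩ := (Metric.totallyBounded_iff.mp
      (isCompact_closedBall (0:E) m).totallyBounded) (1/(m+1)) (by positivity)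
    refine ⟨insert (0:E) htfin.toFinset, Finset.mem_insert_self _ _, fun x hx => ?_⟩
    have : x ∈ closedBall (0:E) m := by
      rw [mem_closedBall, dist_zero_right]; exact hx
    obtain ⟨y, hy, hxy⟩ := Set.mem_iUnion₂.mp (hcov this)
    refine (infDist_le_dist_of_mem (y := y) ?_).trans (le_of_lt (mem_ball.mp hxy))
    simp [hy]
  choose A hA0 hAnet using hA
  have hmeas : ∀ m : ℕ, AEStronglyMeasurable (fun x : E => infDist x (↑(A m) : Set E) ^ r) P :=
    fun m => ((continuous_infDist_pt _).rpow_const fun x => Or.inr hr0).aestronglyMeasurable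
  have hbound : ∀ m : ℕ, ∀ᵐ x ∂P, ‖infDist x (↑(A m) : Set E) ^ r‖ ≤ ‖x‖ ^ r := by
    intro m
    refine ae_of_all _ fun x => ?_
    rw [Real.norm_eq_abs, abs_of_nonneg (Real.rpow_nonneg infDist_nonneg r)]
    refine Real.rpow_le_rpow infDist_nonneg ?_ hr0
    have := infDist_le_dist_of_mem (x := x) (by exact_mod_cast hA0 m)
    rwa [dist_zero_right] at this
  have hlim : ∀ᵐ x ∂P, Tendsto (fun m : ℕ => infDist x (↑(A m) : Set E) ^ r) atTop
      (nhds 0) := by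
    refine ae_of_all _ fun x => ?_
    refine squeeze_zero' (Eventually.of_forall fun m => Real.rpow_nonneg infDist_nonneg r)
      ?_ tendsto_one_div_add_atTop_nhds_zero_nat
    filter_upwards [eventually_ge_atTop ⌈‖x‖⌉₊] with m hm
    have hxm : ‖x‖ ≤ (m:ℝ) := le_trans (Nat.le_ceil _) (by exact_mod_cast hm)
    have h1 : infDist x (↑(A m) : Set E) ≤ 1/(m+1) := hAnet m x hxm
    have h2 : infDist x (↑(A m) : Set E) ^ r ≤ (1/((m:ℝ)+1)) ^ r :=
      Real.rpow_le_rpow infDist_nonneg h1 hr0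
    refine h2.trans ?_
    calc (1/((m:ℝ)+1)) ^ r ≤ (1/((m:ℝ)+1)) ^ (1:ℝ) :=
          Real.rpow_le_rpow_of_exponent_ge (by positivity)
            (by rw [div_le_one (by positivity)]; linarith [Nat.cast_nonneg (α := ℝ) m]) hr
      _ = 1/((m:ℝ)+1) := Real.rpow_one _
  have hDCT := tendsto_integral_of_dominated_convergence (fun x : E => ‖x‖ ^ r)
    hmeas hmom hbound hlim
  rw [integral_zero] at hDCT
  obtain ⟨m, hm⟩ := (hDCT.eventually_lt_const hδ).exists
  exact ⟨A m, ⟨0, hA0 m⟩, hm⟩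

lemma quantError_tendsto_zero (hr : 1 ≤ r) (P : Measure E) [IsProbabilityMeasure P]
    (hmom : Integrable (fun x => ‖x‖ ^ r) P) :
    Tendsto (fun n => quantError P r n) atTop (nhds 0) := by
  have hr0 : (0:ℝ) < r := lt_of_lt_of_le zero_lt_one hr
  rw [Metric.tendsto_atTop]
  intro ε hε
  obtain ⟨α, hαne, hαint⟩ := exists_small_codebook hr P hmom (δ := ε ^ r)
    (Real.rpow_pos_of_pos hε r)
  refine ⟨max α.card 1, fun n hn => ?_⟩
  have h1 : quantError P r n ≤ (∫ x, infDist x (↑α : Set E) ^ r ∂P) ^ (1/r) :=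
    quantError_le P hαne (le_trans (le_max_left _ _) hn)
  have h2 : (∫ x, infDist x (↑α : Set E) ^ r ∂P) ^ (1/r) < (ε ^ r) ^ (1/r) :=
    Real.rpow_lt_rpow (integral_nonneg fun x => Real.rpow_nonneg infDist_nonneg r)
      hαint (by positivity)
  rw [one_div, Real.rpow_rpow_inv hε.le (ne_of_gt hr0)] at h2
  rw [one_div] at h1
  rw [Real.dist_eq, sub_zero, abs_of_nonneg (quantError_nonneg P n)]
  exact lt_of_le_of_lt h1 h2


lemma upperQuantDim_eq (P : Measure E) :
    upperQuantDim P r =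
      limsup (fun n : ℕ => Real.log n / (- Real.log (quantError P r n))) atTop := rfl

lemma eventually_ratio_nonneg (hr : 1 ≤ r) (P : Measure E) [IsProbabilityMeasure P]
    (hmom : Integrable (fun x => ‖x‖ ^ r) P) :
    ∀ᶠ n : ℕ in atTop, 0 ≤ Real.log n / (- Real.log (quantError P r n)) := by
  filter_upwards [(quantError_tendsto_zero hr P hmom).eventually_lt_const one_pos,
    eventually_ge_atTop 1] with n h1 h2
  rcases eq_or_lt_of_le (quantError_nonneg P n) with he | he
  · rw [← he, Real.log_zero, neg_zero, div_zero]
  · have hlogn : 0 ≤ Real.log n := Real.log_nonneg (by exact_mod_cast h2)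
    have hloge : Real.log (quantError P r n) < 0 := Real.log_neg he h1
    exact div_nonneg hlogn (by linarith)

lemma upperQuantDim_nonneg (hr : 1 ≤ r) (P : Measure E) [IsProbabilityMeasure P]
    (hmom : Integrable (fun x => ‖x‖ ^ r) P) : 0 ≤ upperQuantDim P r := by
  rw [upperQuantDim_eq, limsup_eq]
  refine Real.sInf_nonneg fun a ha => ?_
  obtain ⟨n, h1, h2⟩ := (ha.and (eventually_ratio_nonneg hr P hmom)).exists
  linarith

lemma upperQuantDim_le_of_eventual_bound (P : Measure E) {d C : ℝ} (hd : 0 < d) (hC : 0 < C)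
    (h : ∀ᶠ n : ℕ in atTop, quantError P r n ≤ C * (n : ℝ) ^ (-(1 / d))) :
    upperQuantDim P r ≤ d := by
  have htend : Tendsto (fun n : ℕ => C * (n : ℝ) ^ (-(1 / d))) atTop (nhds 0) := by
    have h0 : Tendsto (fun n : ℕ => ((n : ℝ)) ^ (-(1 / d))) atTop (nhds 0) :=
      (tendsto_rpow_neg_atTop (by positivity)).comp tendsto_natCast_atTop_atTop
    simpa using h0.const_mul C
  have hsmall : ∀ᶠ n : ℕ in atTop, quantError P r n < 1 := by
    filter_upwards [h, htend.eventually_lt_const one_pos] with n h1 h2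
    exact lt_of_le_of_lt h1 h2
  have hnn : ∀ᶠ n : ℕ in atTop, 0 ≤ Real.log n / (- Real.log (quantError P r n)) := by
    filter_upwards [hsmall, eventually_ge_atTop 1] with n h1 h2
    rcases eq_or_lt_of_le (quantError_nonneg P n) with he | he
    · rw [← he, Real.log_zero, neg_zero, div_zero]
    · have hlogn : 0 ≤ Real.log n := Real.log_nonneg (by exact_mod_cast h2)
      have hloge : Real.log (quantError P r n) < 0 := Real.log_neg he h1
      exact div_nonneg hlogn (by linarith)
  have habs : ∀ d' : ℝ, d < d' →
      ∀ᶠ n : ℕ in atTop, Real.log n / (- Real.log (quantError P r n)) ≤ d' := by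
    intro d' hdd'
    have hd'0 : 0 < d' := hd.trans hdd'
    have hratio : 0 < d' / d - 1 := by
      rw [sub_pos, lt_div_iff₀ hd]; linarith
    set T : ℝ := (d' * |Real.log C| + 1) / (d' / d - 1) with hT
    have hTlog : ∀ᶠ n : ℕ in atTop, T ≤ Real.log n :=
      (Real.tendsto_log_atTop.comp tendsto_natCast_atTop_atTop).eventually_ge_atTop T
    filter_upwards [h, hTlog, eventually_ge_atTop 1] with n hb hlogT hn1
    rcases eq_or_lt_of_le (quantError_nonneg P n) with he | he
    · rw [← he, Real.log_zero, neg_zero, div_zero]; linarith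
    · have hn1' : (1:ℝ) ≤ (n:ℝ) := by exact_mod_cast hn1
      have hnpos : (0:ℝ) < (n:ℝ) := lt_of_lt_of_le zero_lt_one hn1'
      have hL0 : 0 ≤ Real.log n := Real.log_nonneg hn1'
      have hCn : Real.log (C * (n : ℝ) ^ (-(1 / d)))
          = Real.log C + (-(1 / d)) * Real.log n := by
        rw [Real.log_mul (ne_of_gt hC) (ne_of_gt (Real.rpow_pos_of_pos hnpos _)),
          Real.log_rpow hnpos]
      have hle : Real.log (quantError P r n) ≤ Real.log C - (1 / d) * Real.log n := by
        have := Real.log_le_log he hb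
        rw [hCn] at this; linarith
      set L := Real.log n with hLdef
      set B := - Real.log (quantError P r n) with hBdef
      have hB1 : (1 / d) * L - |Real.log C| ≤ B := by
        have habs1 : Real.log C ≤ |Real.log C| := le_abs_self _
        simp only [hBdef]; linarith
      have hkey : d' * |Real.log C| + 1 ≤ (d' / d - 1) * L := by
        have := mul_le_mul_of_nonneg_left hlogT hratio.le
        rw [hT] at this
        rw [mul_div_cancel₀ _ (ne_of_gt hratio)] at this
        linarith [this]
      have hd'B : L + 1 ≤ d' * B := by
        have h2 := mul_le_mul_of_nonneg_left hB1 hd'0.le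
        have h3 : d' * ((1 / d) * L) = (d' / d) * L := by ring
        nlinarith [h2, hkey]
      have hBpos : 0 < B := by nlinarith
      rw [div_le_iff₀ hBpos]
      linarith

  refine le_of_forall_pos_le_add fun ε hε => ?_
  rw [upperQuantDim_eq, limsup_eq]
  refine csInf_le ⟨0, fun a ha => ?_⟩ (habs (d + ε) (by linarith))
  obtain ⟨n, h1, h2⟩ := (ha.and hnn).exists
  linarith

lemma eventually_le_rpow (hr : 1 ≤ r) (P : Measure E) [IsProbabilityMeasure P]
    (hmom : Integrable (fun x => ‖x‖ ^ r) P) {d : ℝ} (hd : 0 < d)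
    (hbdd : IsBoundedUnder (· ≤ ·) atTop
      (fun n : ℕ => Real.log n / (- Real.log (quantError P r n))))
    (hlt : upperQuantDim P r < d) :
    ∀ᶠ n : ℕ in atTop, quantError P r n ≤ (n : ℝ) ^ (-(1 / d)) := by
  rw [upperQuantDim_eq] at hlt
  have hev := eventually_lt_of_limsup_lt hlt hbdd
  filter_upwards [hev, (quantError_tendsto_zero hr P hmom).eventually_lt_const one_pos,
    eventually_ge_atTop 1] with n h1 h2 h3
  rcases eq_or_lt_of_le (quantError_nonneg P n) with he | he
  · rw [← he]; positivity
  · have hn1 : (1:ℝ) ≤ (n:ℝ) := by exact_mod_cast h3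
    have hnpos : (0:ℝ) < (n:ℝ) := lt_of_lt_of_le zero_lt_one hn1
    have hloge : Real.log (quantError P r n) < 0 := Real.log_neg he h2
    have hB : 0 < - Real.log (quantError P r n) := by linarith
    rw [div_lt_iff₀ hB] at h1
    refine le_of_lt ((Real.lt_rpow_iff_log_lt he hnpos).2 ?_)
    have hd' : (1 / d) * Real.log n < - Real.log (quantError P r n) := by
      have h4 := mul_lt_mul_of_pos_left h1 (show (0:ℝ) < 1/d by positivity)
      have h5 : (1/d) * (d * (- Real.log (quantError P r n)))
          = - Real.log (quantError P r n) := by field_simp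
      linarith
    nlinarith [hd']


lemma sum_s_eq_one {k : ℕ} (s : Fin k → ℝ) (ν : Fin k → Measure E) (hs : ∀ i, 0 < s i)
    (hν : ∀ i, IsProbabilityMeasure (ν i)) (μ : Measure E) [IsProbabilityMeasure μ]
    (hμ : μ = ∑ i, ENNReal.ofReal (s i) • ν i) : ∑ i, s i = 1 := by
  have h1 : μ Set.univ = 1 := measure_univ
  rw [hμ] at h1
  have h2 : (∑ i, ENNReal.ofReal (s i) • ν i) Set.univ = ∑ i, ENNReal.ofReal (s i) := by
    rw [Measure.coe_finset_sum, Finset.sum_apply]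
    refine Finset.sum_congr rfl fun i _ => ?_
    haveI := hν i
    simp [Measure.smul_apply]
  rw [h2, ← ENNReal.ofReal_sum_of_nonneg (fun i _ => (hs i).le)] at h1
  exact ENNReal.ofReal_eq_one.mp h1

set_option maxHeartbeats 1000000 in
lemma integral_piece_le (hr : 1 ≤ r) {k : ℕ} (s : Fin k → ℝ) (ν : Fin k → Measure E)
    (hs : ∀ i, 0 < s i) (hν : ∀ i, IsProbabilityMeasure (ν i))
    (hνmom : ∀ i, Integrable (fun x => ‖x‖ ^ r) (ν i))
    (μ : Measure E) (hμ : μ = ∑ i, ENNReal.ofReal (s i) • ν i)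
    (i : Fin k) {α : Finset E} (hα : α.Nonempty) :
    s i * ∫ x, infDist x (↑α : Set E) ^ r ∂(ν i) ≤ ∫ x, infDist x (↑α : Set E) ^ r ∂μ := by
  have hint : ∀ j, Integrable (fun x => infDist x (↑α : Set E) ^ r) (ν j) := fun j => by
    haveI := hν j; exact integrable_infDist_rpow hr (ν j) (hνmom j) hα
  have hint2 : ∀ j ∈ (Finset.univ : Finset (Fin k)),
      Integrable (fun x => infDist x (↑α : Set E) ^ r) (ENNReal.ofReal (s j) • ν j) :=
    fun j _ => (hint j).smul_measure ENNReal.ofReal_ne_top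
  rw [hμ, integral_finset_sum_measure hint2]
  have hterm : ∀ j ∈ (Finset.univ : Finset (Fin k)),
      ∫ x, infDist x (↑α : Set E) ^ r ∂(ENNReal.ofReal (s j) • ν j)
      = s j * ∫ x, infDist x (↑α : Set E) ^ r ∂(ν j) := fun j _ => by
    rw [integral_smul_measure, ENNReal.toReal_ofReal (hs j).le, smul_eq_mul]
  have h1 : ∫ x, infDist x (↑α : Set E) ^ r ∂(ENNReal.ofReal (s i) • ν i)
      ≤ ∑ j, ∫ x, infDist x (↑α : Set E) ^ r ∂(ENNReal.ofReal (s j) • ν j) :=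
    Finset.single_le_sum
      (f := fun j => ∫ x, infDist x (↑α : Set E) ^ r ∂(ENNReal.ofReal (s j) • ν j))
      (fun j _ => integral_nonneg fun x => Real.rpow_nonneg infDist_nonneg r)
      (Finset.mem_univ i)
  rw [hterm i (Finset.mem_univ i)] at h1
  exact h1

lemma quantError_piece_le (hr : 1 ≤ r) {k : ℕ} (s : Fin k → ℝ) (ν : Fin k → Measure E)
    (hs : ∀ i, 0 < s i) (hν : ∀ i, IsProbabilityMeasure (ν i))
    (hνmom : ∀ i, Integrable (fun x => ‖x‖ ^ r) (ν i))
    (μ : Measure E) (hμ : μ = ∑ i, ENNReal.ofReal (s i) • ν i)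
    (i : Fin k) {n : ℕ} (hn : 1 ≤ n) :
    quantError (ν i) r n ≤ (s i)⁻¹ ^ (1 / r) * quantError μ r n := by
  haveI := hν i
  have hr0 : (0:ℝ) < r := lt_of_lt_of_le zero_lt_one hr
  have hc : 0 < (s i)⁻¹ ^ (1 / r) := Real.rpow_pos_of_pos (inv_pos.2 (hs i)) _
  have key : ∀ e ∈ QSet μ r n, quantError (ν i) r n ≤ (s i)⁻¹ ^ (1 / r) * e := by
    rintro e ⟨α, h1, h2, rfl⟩
    have hα : α.Nonempty := Finset.card_pos.mp h1
    refine (quantError_le (ν i) hα h2).trans ?_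
    have h4 : ∫ x, infDist x (↑α : Set E) ^ r ∂(ν i)
        ≤ (s i)⁻¹ * ∫ x, infDist x (↑α : Set E) ^ r ∂μ :=
      (le_inv_mul_iff₀ (hs i)).2 (integral_piece_le hr s ν hs hν hνmom μ hμ i hα)
    calc (∫ x, infDist x (↑α : Set E) ^ r ∂(ν i)) ^ (1 / r)
        ≤ ((s i)⁻¹ * ∫ x, infDist x (↑α : Set E) ^ r ∂μ) ^ (1 / r) :=
          Real.rpow_le_rpow (integral_nonneg fun x => Real.rpow_nonneg infDist_nonneg r)
            h4 (by positivity)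
      _ = (s i)⁻¹ ^ (1 / r) * (∫ x, infDist x (↑α : Set E) ^ r ∂μ) ^ (1 / r) :=
          Real.mul_rpow (inv_nonneg.2 (hs i).le)
            (integral_nonneg fun x => Real.rpow_nonneg infDist_nonneg r)
  have h6 : quantError (ν i) r n / ((s i)⁻¹ ^ (1 / r)) ≤ quantError μ r n := by
    rw [quantError_eq μ]
    refine le_csInf (qset_nonempty μ hn) fun e he => (div_le_iff₀ hc).2 ?_
    rw [mul_comm]
    exact key e he
  have h7 := (div_le_iff₀ hc).1 h6
  linarith [h7, mul_comm (quantError μ r n) ((s i)⁻¹ ^ (1 / r))]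

lemma bounded_transfer (hr : 1 ≤ r) (P Q : Measure E) [IsProbabilityMeasure P]
    [IsProbabilityMeasure Q]
    (hmomP : Integrable (fun x => ‖x‖ ^ r) P)
    (hmomQ : Integrable (fun x => ‖x‖ ^ r) Q)
    {c : ℝ} (hc : 1 ≤ c)
    (hcomp : ∀ n : ℕ, 1 ≤ n → quantError Q r n ≤ c * quantError P r n)
    (hbdd : IsBoundedUnder (· ≤ ·) atTop
      (fun n : ℕ => Real.log n / (- Real.log (quantError P r n)))) :
    IsBoundedUnder (· ≤ ·) atTop
      (fun n : ℕ => Real.log n / (- Real.log (quantError Q r n))) := by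
  obtain ⟨M0, hM0⟩ := hbdd
  rw [eventually_map] at hM0
  set M : ℝ := max M0 1 with hMdef
  have hM1 : (1:ℝ) ≤ M := le_max_right _ _
  have hM0' : ∀ᶠ n : ℕ in atTop, Real.log n / (- Real.log (quantError P r n)) ≤ M := by
    filter_upwards [hM0] with n h
    exact h.trans (le_max_left _ _)
  refine isBoundedUnder_of_eventually_le (a := 2 * M) ?_
  have hclog : ∀ᶠ n : ℕ in atTop, 2 * M * Real.log c ≤ Real.log n :=
    (Real.tendsto_log_atTop.comp tendsto_natCast_atTop_atTop).eventually_ge_atTop _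
  filter_upwards [hM0', hclog, eventually_ge_atTop 2,
    (quantError_tendsto_zero hr P hmomP).eventually_lt_const one_pos,
    (quantError_tendsto_zero hr Q hmomQ).eventually_lt_const one_pos] with n h1 h2 h3 hP1 hQ1
  have hn1 : 1 ≤ n := le_trans (by norm_num) h3
  have hn2 : (2:ℝ) ≤ (n:ℝ) := by exact_mod_cast h3
  have hLpos : 0 < Real.log n := Real.log_pos (by linarith)
  rcases eq_or_lt_of_le (quantError_nonneg Q n) with he | he
  · rw [← he, Real.log_zero, neg_zero, div_zero]; nlinarith
  · have hcompn := hcomp n hn1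
    have hc0 : (0:ℝ) < c := lt_of_lt_of_le zero_lt_one hc
    have hPpos : 0 < quantError P r n := by nlinarith
    have hlogeP : Real.log (quantError P r n) < 0 := Real.log_neg hPpos hP1
    have hBP : 0 < - Real.log (quantError P r n) := by linarith
    have hLle : Real.log n ≤ M * (- Real.log (quantError P r n)) := by
      rw [div_le_iff₀ hBP] at h1; linarith
    have hlogc : 0 ≤ Real.log c := Real.log_nonneg hc
    have hlogQ : Real.log (quantError Q r n) ≤ Real.log c + Real.log (quantError P r n) := by
      have := Real.log_le_log he hcompn
      rwa [Real.log_mul (ne_of_gt hc0) (ne_of_gt hPpos)] at this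
    have hBQ : - Real.log (quantError Q r n)
        ≥ - Real.log (quantError P r n) - Real.log c := by linarith
    -- -log e_P ≥ log n / M ; log c ≤ log n / (2M)
    have hMpos : (0:ℝ) < M := lt_of_lt_of_le zero_lt_one hM1
    have hBP2 : Real.log n / M ≤ - Real.log (quantError P r n) := by
      rw [div_le_iff₀ hMpos]; nlinarith
    have hlogc2 : Real.log c ≤ Real.log n / (2 * M) := by
      rw [le_div_iff₀ (by positivity)]; nlinarith
    have hBQ2 : Real.log n / (2 * M) ≤ - Real.log (quantError Q r n) := by
      have hhalf : Real.log n / M - Real.log n / (2 * M) = Real.log n / (2 * M) := by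
        field_simp; ring
      linarith
    have hBQpos : 0 < - Real.log (quantError Q r n) :=
      lt_of_lt_of_le (by positivity) hBQ2
    rw [div_le_iff₀ hBQpos]
    have := mul_le_mul_of_nonneg_left hBQ2 (show (0:ℝ) ≤ 2*M by positivity)
    have heq : 2 * M * (Real.log n / (2 * M)) = Real.log n := by
      field_simp
    nlinarith


set_option maxHeartbeats 2000000 in
lemma main_le (hr : 1 ≤ r) (μ : Measure E) [IsProbabilityMeasure μ]
    (hmom : Integrable (fun x => ‖x‖ ^ r) μ) {k : ℕ} (hk : 0 < k)
    (s : Fin k → ℝ) (ν : Fin k → Measure E) (hs : ∀ i, 0 < s i)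
    (hν : ∀ i, IsProbabilityMeasure (ν i))
    (hνmom : ∀ i, Integrable (fun x => ‖x‖ ^ r) (ν i))
    (hμ : μ = ∑ i, ENNReal.ofReal (s i) • ν i) :
    upperQuantDim μ r ≤ ⨆ i, upperQuantDim (ν i) r := by
  haveI : Nonempty (Fin k) := ⟨⟨0, hk⟩⟩
  have hr0 : (0:ℝ) < r := lt_of_lt_of_le zero_lt_one hr
  have hsum : ∑ i, s i = 1 := sum_s_eq_one s ν hs hν μ hμ
  have hsle : ∀ i, s i ≤ 1 := fun i => by
    have h := Finset.single_le_sum (f := s) (fun j _ => (hs j).le) (Finset.mem_univ i)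
    rw [hsum] at h; exact h
  have hbddAbove : BddAbove (Set.range fun i => upperQuantDim (ν i) r) :=
    Set.Finite.bddAbove (Set.finite_range _)
  have hSnn : 0 ≤ ⨆ i, upperQuantDim (ν i) r := by
    refine le_trans ?_ (le_ciSup hbddAbove (⟨0, hk⟩ : Fin k))
    haveI := hν ⟨0, hk⟩
    exact upperQuantDim_nonneg hr (ν ⟨0, hk⟩) (hνmom ⟨0, hk⟩)
  by_cases hbdd : IsBoundedUnder (· ≤ ·) atTop
      (fun n : ℕ => Real.log n / (- Real.log (quantError μ r n)))
  case neg =>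
    have hempty : {a : ℝ | ∀ᶠ n : ℕ in atTop,
        Real.log n / (- Real.log (quantError μ r n)) ≤ a} = ∅ := by
      rw [Set.eq_empty_iff_forall_notMem]
      intro a ha
      exact hbdd (isBoundedUnder_of_eventually_le ha)
    rw [upperQuantDim_eq, limsup_eq, hempty, Real.sInf_empty]
    exact hSnn
  case pos =>
    refine le_of_forall_pos_le_add fun ε hε => ?_
    set S := ⨆ i, upperQuantDim (ν i) r with hSdef
    set d := S + ε / 2 with hddef
    have hd0 : 0 < d := by rw [hddef]; linarith
    have hdi : ∀ i, upperQuantDim (ν i) r < d := fun i => by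
      have := le_ciSup hbddAbove i
      rw [hddef]; rw [← hSdef] at this; linarith
    -- boundedness of each piece
    have hci : ∀ i, (1:ℝ) ≤ (s i)⁻¹ ^ (1 / r) := fun i => by
      have h1 : (1:ℝ) ≤ (s i)⁻¹ := one_le_inv_iff₀.mpr ⟨hs i, hsle i⟩
      calc (1:ℝ) = 1 ^ (1/r) := (Real.one_rpow _).symm
        _ ≤ (s i)⁻¹ ^ (1/r) := Real.rpow_le_rpow zero_le_one h1 (by positivity)
    have hbdd_i : ∀ i, IsBoundedUnder (· ≤ ·) atTop
        (fun n : ℕ => Real.log n / (- Real.log (quantError (ν i) r n))) := fun i => by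
      haveI := hν i
      exact bounded_transfer hr μ (ν i) hmom (hνmom i) (hci i)
        (fun n hn => quantError_piece_le hr s ν hs hν hνmom μ hμ i hn) hbdd
    have hev_i : ∀ i, ∀ᶠ n : ℕ in atTop, quantError (ν i) r n ≤ (n:ℝ) ^ (-(1/d)) := fun i => by
      haveI := hν i
      exact eventually_le_rpow hr (ν i) (hνmom i) hd0 (hbdd_i i) (hdi i)
    have hev : ∀ᶠ n : ℕ in atTop, ∀ i, quantError (ν i) r n ≤ (n:ℝ) ^ (-(1/d)) :=
      eventually_all.2 hev_i
    -- key bound along multiples of k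
    have hkey : ∀ᶠ n : ℕ in atTop, quantError μ r (k * n) ≤ 2 * (n:ℝ) ^ (-(1/d)) := by
      filter_upwards [hev, eventually_ge_atTop 1] with n hn hn1
      classical
      have hnR : (0:ℝ) < (n:ℝ) := by exact_mod_cast hn1
      set ε' : ℝ := (n:ℝ) ^ (-(1/d)) with hε'def
      have hε'pos : 0 < ε' := Real.rpow_pos_of_pos hnR _
      have hchoice : ∀ i, ∃ α : Finset E, α.Nonempty ∧ α.card ≤ n ∧
          (∫ x, infDist x (↑α : Set E) ^ r ∂(ν i)) ^ (1/r) < quantError (ν i) r n + ε' :=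
        fun i => by haveI := hν i; exact exists_codebook (ν i) hn1 hε'pos
      choose A hA1 hA2 hA3 using hchoice
      set β : Finset E := Finset.univ.biUnion A with hβdef
      have hβne : β.Nonempty := by
        obtain ⟨x, hx⟩ := hA1 ⟨0, hk⟩
        exact ⟨x, Finset.mem_biUnion.2 ⟨⟨0, hk⟩, Finset.mem_univ _, hx⟩⟩
      have hβcard : β.card ≤ k * n := by
        refine le_trans Finset.card_biUnion_le ?_
        calc ∑ i, (A i).card ≤ ∑ _i : Fin k, n := Finset.sum_le_sum fun i _ => hA2 i
          _ = k * n := by simp [Finset.sum_const, Finset.card_univ, mul_comm]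
      have hint_β : ∀ j, Integrable (fun x => infDist x (↑β : Set E) ^ r) (ν j) := fun j => by
        haveI := hν j; exact integrable_infDist_rpow hr (ν j) (hνmom j) hβne
      have hμint : ∫ x, infDist x (↑β : Set E) ^ r ∂μ
          = ∑ j, s j * ∫ x, infDist x (↑β : Set E) ^ r ∂(ν j) := by
        have hint2 : ∀ j ∈ (Finset.univ : Finset (Fin k)),
            Integrable (fun x => infDist x (↑β : Set E) ^ r) (ENNReal.ofReal (s j) • ν j) :=
          fun j _ => (hint_β j).smul_measure ENNReal.ofReal_ne_top
        rw [hμ, integral_finset_sum_measure hint2]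
        exact Finset.sum_congr rfl fun j _ => by
          rw [integral_smul_measure, ENNReal.toReal_ofReal (hs j).le, smul_eq_mul]
      have hterm : ∀ j ∈ (Finset.univ : Finset (Fin k)),
          s j * ∫ x, infDist x (↑β : Set E) ^ r ∂(ν j) ≤ s j * (2 * ε') ^ r := by
        intro j _
        haveI := hν j
        refine mul_le_mul_of_nonneg_left ?_ (hs j).le
        have hsub : ((A j : Finset E) : Set E) ⊆ ((β : Finset E) : Set E) := by
          intro x hx
          simp only [Finset.coe_biUnion, Finset.coe_univ, Set.mem_iUnion, hβdef]
          exact ⟨j, trivial, hx⟩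
        have hmono : ∀ x : E, infDist x (↑β : Set E) ^ r ≤ infDist x (↑(A j) : Set E) ^ r :=
          fun x => Real.rpow_le_rpow infDist_nonneg
            (infDist_le_infDist_of_subset hsub (by exact_mod_cast (hA1 j))) hr0.le
        have h1 : ∫ x, infDist x (↑β : Set E) ^ r ∂(ν j)
            ≤ ∫ x, infDist x (↑(A j) : Set E) ^ r ∂(ν j) :=
          integral_mono (hint_β j) (integrable_infDist_rpow hr (ν j) (hνmom j) (hA1 j)) hmono
        refine h1.trans ?_
        have h2 : (∫ x, infDist x (↑(A j) : Set E) ^ r ∂(ν j)) ^ (1/r) ≤ 2 * ε' := by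
          refine (hA3 j).le.trans ?_
          have := hn j
          linarith
        have hInn : 0 ≤ ∫ x, infDist x (↑(A j) : Set E) ^ r ∂(ν j) :=
          integral_nonneg fun x => Real.rpow_nonneg infDist_nonneg r
        have h3 : ((∫ x, infDist x (↑(A j) : Set E) ^ r ∂(ν j)) ^ (1/r)) ^ r ≤ (2*ε') ^ r :=
          Real.rpow_le_rpow (Real.rpow_nonneg hInn _) h2 hr0.le
        rwa [one_div, Real.rpow_inv_rpow hInn (ne_of_gt hr0)] at h3
      have hsumle : ∫ x, infDist x (↑β : Set E) ^ r ∂μ ≤ (2*ε') ^ r := by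
        rw [hμint]
        calc ∑ j, s j * ∫ x, infDist x (↑β : Set E) ^ r ∂(ν j)
            ≤ ∑ j, s j * (2*ε') ^ r := Finset.sum_le_sum hterm
          _ = (∑ j, s j) * (2*ε') ^ r := by rw [Finset.sum_mul]
          _ = (2*ε') ^ r := by rw [hsum, one_mul]
      have h4 : quantError μ r (k*n) ≤ (∫ x, infDist x (↑β : Set E) ^ r ∂μ) ^ (1/r) :=
        quantError_le μ hβne hβcard
      have h5 : (∫ x, infDist x (↑β : Set E) ^ r ∂μ) ^ (1/r) ≤ ((2*ε') ^ r) ^ (1/r) :=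
        Real.rpow_le_rpow (integral_nonneg fun x => Real.rpow_nonneg infDist_nonneg r)
          hsumle (by positivity)
      rw [one_div, Real.rpow_rpow_inv (by positivity) (ne_of_gt hr0)] at h5
      rw [one_div] at h4
      linarith [h4.trans h5]
    -- convert to a bound for all indices
    obtain ⟨N, hN⟩ := eventually_atTop.1 hkey
    have hkR : (0:ℝ) < (k:ℝ) := by exact_mod_cast hk
    set C : ℝ := 2 * (2*(k:ℝ)) ^ (1/d) with hCdef
    have hCpos : 0 < C := by
      have : (0:ℝ) < (2*(k:ℝ)) ^ (1/d) := Real.rpow_pos_of_pos (by linarith) _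
      rw [hCdef]; linarith
    have hfin : ∀ᶠ m : ℕ in atTop, quantError μ r m ≤ C * (m:ℝ) ^ (-(1/d)) := by
      filter_upwards [eventually_ge_atTop (2*k*(N+1))] with m hm
      set n : ℕ := m / k with hndef
      have hn2 : 2*(N+1) ≤ n := (Nat.le_div_iff_mul_le hk).2 (by nlinarith [hm])
      have hnN : N ≤ n := by omega
      have hn1 : 1 ≤ n := by omega
      have hm1 : 1 ≤ m := by nlinarith [hm, hk]
      have hkn : k * n ≤ m := by
        rw [hndef, mul_comm]; exact Nat.div_mul_le_self m k
      have hq1 : quantError μ r m ≤ quantError μ r (k*n) :=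
        quantError_antitone μ (Nat.mul_pos hk hn1) hkn
      have hq2 : quantError μ r (k*n) ≤ 2 * (n:ℝ) ^ (-(1/d)) := hN n hnN
      -- (n:ℝ) ≥ m/(2k)
      have hmlt : m < (n+1) * k := (Nat.div_lt_iff_lt_mul hk).1 (by omega)
      have hmltR : (m:ℝ) < ((n:ℝ)+1) * k := by exact_mod_cast hmlt
      have hnR1 : (1:ℝ) ≤ (n:ℝ) := by exact_mod_cast hn1
      have hmR : (m:ℝ)/(2*(k:ℝ)) ≤ (n:ℝ) := by
        rw [div_le_iff₀ (by positivity)]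
        nlinarith
      have hmpos : (0:ℝ) < (m:ℝ)/(2*(k:ℝ)) := by
        have : (0:ℝ) < (m:ℝ) := by exact_mod_cast hm1
        positivity
      have h6 : (n:ℝ) ^ (-(1/d)) ≤ ((m:ℝ)/(2*(k:ℝ))) ^ (-(1/d)) :=
        Real.rpow_le_rpow_of_nonpos hmpos hmR (neg_nonpos.mpr (by positivity))
      have hmnn : (0:ℝ) ≤ (m:ℝ) := Nat.cast_nonneg m
      have h7 : ((m:ℝ)/(2*(k:ℝ))) ^ (-(1/d)) = (2*(k:ℝ)) ^ (1/d) * (m:ℝ) ^ (-(1/d)) := by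
        rw [Real.div_rpow hmnn (by linarith : (0:ℝ) ≤ 2*(k:ℝ)),
          Real.rpow_neg (by linarith : (0:ℝ) ≤ 2*(k:ℝ)), div_eq_mul_inv, inv_inv, mul_comm]
      have h8 : quantError μ r m ≤ 2 * ((2*(k:ℝ)) ^ (1/d) * (m:ℝ) ^ (-(1/d))) := by
        rw [← h7]
        refine (hq1.trans hq2).trans ?_
        exact mul_le_mul_of_nonneg_left h6 (by norm_num)
      calc quantError μ r m ≤ 2 * ((2*(k:ℝ)) ^ (1/d) * (m:ℝ) ^ (-(1/d))) := h8
        _ = C * (m:ℝ) ^ (-(1/d)) := by rw [hCdef]; ring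
    have hfinal := upperQuantDim_le_of_eventual_bound μ hd0 hCpos hfin
    calc upperQuantDim μ r ≤ d := hfinal
      _ = S + ε/2 := hddef
      _ ≤ S + ε := by linarith
end QD


/-- for `r ∈ [1,∞)`, the upper quantization dimension of order `r` is finitely
stable: `D̄_r(μ) = inf { max_i D̄_r(μ_i) : μ = Σ_{i=1}^n s_i μ_i, s_i > 0, μ_i ∈ M_r }`. -/
theorem upperQuantDim_finitely_stable (q : ℕ) (r : ℝ) (hr : 1 ≤ r)
    (μ : Measure (EuclideanSpace ℝ (Fin q))) [IsProbabilityMeasure μ]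
    (hmom : Integrable (fun x => ‖x‖ ^ r) μ) :
    upperQuantDim μ r = sInf {d : ℝ |
      ∃ (n : ℕ) (_ : 0 < n) (s : Fin n → ℝ) (ν : Fin n → Measure (EuclideanSpace ℝ (Fin q))),
        (∀ i, 0 < s i) ∧ (∀ i, IsProbabilityMeasure (ν i)) ∧
        (∀ i, Integrable (fun x => ‖x‖ ^ r) (ν i)) ∧
        μ = ∑ i, ENNReal.ofReal (s i) • ν i ∧
        d = ⨆ i, upperQuantDim (ν i) r} := by
  have hmem : upperQuantDim μ r ∈ {d : ℝ |
      ∃ (n : ℕ) (_ : 0 < n) (s : Fin n → ℝ) (ν : Fin n → Measure (EuclideanSpace ℝ (Fin q))),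
        (∀ i, 0 < s i) ∧ (∀ i, IsProbabilityMeasure (ν i)) ∧
        (∀ i, Integrable (fun x => ‖x‖ ^ r) (ν i)) ∧
        μ = ∑ i, ENNReal.ofReal (s i) • ν i ∧
        d = ⨆ i, upperQuantDim (ν i) r} := by
    refine ⟨1, one_pos, fun _ => 1, fun _ => μ, fun _ => one_pos, fun _ => inferInstance,
      fun _ => hmom, ?_, ?_⟩
    · simp
    · exact (ciSup_unique (s := fun _ : Fin 1 => upperQuantDim μ r)).symm
  have hlb : ∀ d ∈ {d : ℝ |
      ∃ (n : ℕ) (_ : 0 < n) (s : Fin n → ℝ) (ν : Fin n → Measure (EuclideanSpace ℝ (Fin q))),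
        (∀ i, 0 < s i) ∧ (∀ i, IsProbabilityMeasure (ν i)) ∧
        (∀ i, Integrable (fun x => ‖x‖ ^ r) (ν i)) ∧
        μ = ∑ i, ENNReal.ofReal (s i) • ν i ∧
        d = ⨆ i, upperQuantDim (ν i) r}, upperQuantDim μ r ≤ d := by
    rintro d ⟨k, hk, s, ν, hs, hν, hνmom, hμ, rfl⟩
    exact QD.main_le hr μ hmom hk s ν hs hν hνmom hμ
  exact le_antisymm (le_csInf ⟨_, hmem⟩ hlb)
    (csInf_le ⟨upperQuantDim μ r, fun d hd => hlb d hd⟩ hmem)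
end
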